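/- Let ∇ be a Type B connection with C₂₂¹ = 0, C₁₂¹ = C₂₂² ≠ 0, and set α = C₁₂². Then f(x¹,x²) = (x¹)^α satisfies the equation H(f) = −f ρ_s, where ρ_s is the symmetrized Ricci tensor; i.e., f ∈ E(−1,∇). -/

import Mathlib

open Real

/-- Partial derivative ∂_i on ℝ². -/
noncomputable def pd (i : Fin 2) (f : ℝ × ℝ → ℝ) : ℝ × ℝ → ℝ :=
  fun p => if i = 0 then deriv (fun t => f (t, p.2)) p.1
           else deriv (fun t => f (p.1, t)) p.2

/-- Affine Hessian H(f)_{ij} = ∂_i∂_j f − Σ_k Γ_{ij}^k ∂_k f. -/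
noncomputable def Hess (Γ : Fin 2 → Fin 2 → Fin 2 → (ℝ × ℝ → ℝ))
    (f : ℝ × ℝ → ℝ) (i j : Fin 2) : ℝ × ℝ → ℝ :=
  fun p => pd i (pd j f) p - ∑ k, Γ i j k p * pd k f p

/-- Ricci tensor ρ_{jk} = ∂_i Γ_{jk}^i − ∂_j Γ_{ik}^i + Γ_{il}^i Γ_{jk}^l − Γ_{jl}^i Γ_{ik}^l. -/
noncomputable def Ric (Γ : Fin 2 → Fin 2 → Fin 2 → (ℝ × ℝ → ℝ)) (j k : Fin 2) :
    ℝ × ℝ → ℝ :=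
  fun p => (∑ i, pd i (Γ j k i) p) - (∑ i, pd j (Γ i k i) p)
    + (∑ i, ∑ l, Γ i l i p * Γ j k l p) - (∑ i, ∑ l, Γ j l i p * Γ i k l p)

/-- Symmetrized Ricci tensor. -/
noncomputable def RicS (Γ : Fin 2 → Fin 2 → Fin 2 → (ℝ × ℝ → ℝ)) (i j : Fin 2) :
    ℝ × ℝ → ℝ :=
  fun p => (Ric Γ i j p + Ric Γ j i p) / 2

/-- Covariant derivative of the Ricci tensor: (∇ρ)(i,j;k). -/
noncomputable def nabRic (Γ : Fin 2 → Fin 2 → Fin 2 → (ℝ × ℝ → ℝ)) (i j k : Fin 2) :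
    ℝ × ℝ → ℝ :=
  fun p => pd k (Ric Γ i j) p - ∑ l, Γ k i l p * Ric Γ l j p
    - ∑ l, Γ k j l p * Ric Γ i l p

/-- Type B Christoffel symbols Γ_{ij}^k = C_{ij}^k / x¹. -/
noncomputable def ΓB (C : Fin 2 → Fin 2 → Fin 2 → ℝ) :
    Fin 2 → Fin 2 → Fin 2 → (ℝ × ℝ → ℝ) :=
  fun i j k p => C i j k / p.1

/-!
A Type B connection is invariant under the dilations `x ↦ λ x`, so every tensor built from it
is homogeneous in `x¹`: `Γ = C / x¹`, `ρ = r(C) / (x¹)²`, and for `f = (x¹)^α` the Hessian is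
`h(C, α) (x¹)^α / (x¹)²`, where `r` and `h` are polynomials in the constants. The eigenvalue
equation thus reduces to the polynomial identity `h(C, α) = -(r_ij + r_ji) / 2`, which holds once
`C₂₂¹ = 0`, `C₁₂¹ = C₂₂²` and `α = C₁₂²`.
-/

lemma pd_zero_comp_fst (g : ℝ → ℝ) :
    pd 0 (fun q : ℝ × ℝ => g q.1) = fun q => deriv g q.1 := rfl

lemma pd_one_comp_fst (g : ℝ → ℝ) : pd 1 (fun q : ℝ × ℝ => g q.1) = fun _ => 0 := by
  funext q
  simp [pd]

lemma pd_const (i : Fin 2) (c : ℝ) : pd i (fun _ => c) = fun _ => 0 := by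
  funext q
  simp [pd]

lemma Hess_comp_fst (Γ : Fin 2 → Fin 2 → Fin 2 → (ℝ × ℝ → ℝ)) (g : ℝ → ℝ) (i j : Fin 2)
    (p : ℝ × ℝ) :
    Hess Γ (fun q => g q.1) i j p
      = (if i = 0 ∧ j = 0 then deriv (deriv g) p.1 else 0) - Γ i j 0 p * deriv g p.1 := by
  fin_cases i <;> fin_cases j <;>
    simp [Hess, Fin.sum_univ_two, pd_zero_comp_fst, pd_one_comp_fst, pd_const]

lemma ΓB_eq_comp_fst (C : Fin 2 → Fin 2 → Fin 2 → ℝ) (i j k : Fin 2) :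
    ΓB C i j k = fun q => (fun t => C i j k / t) q.1 := rfl

lemma pd_ΓB (C : Fin 2 → Fin 2 → Fin 2 → ℝ) (m i j k : Fin 2) (p : ℝ × ℝ) :
    pd m (ΓB C i j k) p = if m = 0 then -C i j k / p.1 ^ 2 else 0 := by
  fin_cases m <;> simp [ΓB_eq_comp_fst, pd_zero_comp_fst, pd_one_comp_fst]

def ricCoeff (C : Fin 2 → Fin 2 → Fin 2 → ℝ) (j k : Fin 2) : ℝ :=
  -C j k 0 + (if j = 0 then ∑ i, C i k i else 0)
    + ∑ i, ∑ l, (C i l i * C j k l - C j l i * C i k l)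

lemma Ric_ΓB (C : Fin 2 → Fin 2 → Fin 2 → ℝ) (j k : Fin 2) {p : ℝ × ℝ} (hp : p.1 ≠ 0) :
    Ric (ΓB C) j k p = ricCoeff C j k / p.1 ^ 2 := by
  simp only [Ric, ricCoeff, pd_ΓB, ΓB, Fin.sum_univ_two, one_ne_zero, if_false]
  split_ifs <;> field_simp <;> ring

lemma Hess_ΓB_rpow (C : Fin 2 → Fin 2 → Fin 2 → ℝ) (a : ℝ) (i j : Fin 2) {p : ℝ × ℝ}
    (hp : 0 < p.1) :
    Hess (ΓB C) (fun q => q.1 ^ a) i j p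
      = ((if i = 0 ∧ j = 0 then a * (a - 1) else 0) - C i j 0 * a) * p.1 ^ a / p.1 ^ 2 := by
  have hx : p.1 ≠ 0 := hp.ne'
  have h1 : p.1 ^ (a - 1) = p.1 ^ a / p.1 := rpow_sub_one hx a
  have h2 : p.1 ^ (a - 1 - 1) = p.1 ^ a / p.1 ^ 2 := by
    rw [rpow_sub_one hx, h1]
    ring
  simp only [Hess_comp_fst (ΓB C) (· ^ a), deriv_rpow_const', deriv_const_mul_field',
    Real.deriv_rpow_const, ΓB, h1, h2]
  split_ifs
  · field_simp
  · field_simp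
    ring

lemma ricCoeff_symmetrize_eq (C : Fin 2 → Fin 2 → Fin 2 → ℝ) (hsym : ∀ i j k, C i j k = C j i k)
    (h1 : C 1 1 0 = 0) (h2 : C 0 1 0 = C 1 1 1) (i j : Fin 2) :
    (ricCoeff C i j + ricCoeff C j i) / 2
      = C i j 0 * C 0 1 1 - (if i = 0 ∧ j = 0 then C 0 1 1 * (C 0 1 1 - 1) else 0) := by
  have e1 : C 1 0 0 = C 0 1 0 := hsym 1 0 0
  have e2 : C 1 0 1 = C 0 1 1 := hsym 1 0 1
  fin_cases i <;> fin_cases j <;>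
    simp only [ricCoeff, Fin.sum_univ_two, Fin.zero_eta, Fin.mk_one, Fin.isValue, one_ne_zero,
      if_true, if_false, and_self, and_false, false_and, e1, e2, h1, ← h2] <;>
    ring

theorem typeB_eigenvalue_neg_one_case1_general
    (C : Fin 2 → Fin 2 → Fin 2 → ℝ)
    (hsym : ∀ i j k, C i j k = C j i k)
    (h1 : C 1 1 0 = 0) (h2 : C 0 1 0 = C 1 1 1) :
    ∀ i j : Fin 2, ∀ p : ℝ × ℝ, 0 < p.1 →
      Hess (ΓB C) (fun q => q.1 ^ (C 0 1 1)) i j p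
        = - (p.1 ^ (C 0 1 1)) * RicS (ΓB C) i j p := by
  intro i j p hp
  rw [Hess_ΓB_rpow C _ i j hp, RicS, Ric_ΓB C i j hp.ne', Ric_ΓB C j i hp.ne']
  linear_combination (p.1 ^ C 0 1 1 / p.1 ^ 2) * ricCoeff_symmetrize_eq C hsym h1 h2 i j

/-- Type B with C₂₂¹ = 0, C₁₂¹ = C₂₂² ≠ 0: f = (x¹)^{C₁₂²} lies in E(−1,∇). -/
theorem typeB_eigenvalue_neg_one_case1
    (C : Fin 2 → Fin 2 → Fin 2 → ℝ)
    (hsym : ∀ i j k, C i j k = C j i k)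
    (h1 : C 1 1 0 = 0) (h2 : C 0 1 0 = C 1 1 1) (h3 : C 0 1 0 ≠ 0) :
    ∀ i j : Fin 2, ∀ p : ℝ × ℝ, 0 < p.1 →
      Hess (ΓB C) (fun q => q.1 ^ (C 0 1 1)) i j p
        = - (p.1 ^ (C 0 1 1)) * RicS (ΓB C) i j p :=
  typeB_eigenvalue_neg_one_case1_general C hsym h1 h2
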